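/- arXiv:0802.2131 — 4 statements merged into one kernel-verified Lean document; each statement's English description precedes it below -/
import Mathlib

section
/- Let u, p be a C¹ helical solution of the 3D Euler equations ∂u/∂t + (u·∇)u = -∇p + F on a helical domain, with p a helical function. Define u_ξ = y u_x - x u_y + κ u_z and F_ξ = y F_x - x F_y + κ F_z. Then the material derivative of u_ξ equals F_ξ: ∂u_ξ/∂t + (u·∇)u_ξ = F_ξ. -/
/-- Spatial partial derivatives on ℝ³. -/
noncomputable def pdx (f : ℝ × ℝ × ℝ → ℝ) (p : ℝ × ℝ × ℝ) : ℝ := fderiv ℝ f p (1, 0, 0)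
noncomputable def pdy (f : ℝ × ℝ × ℝ → ℝ) (p : ℝ × ℝ × ℝ) : ℝ := fderiv ℝ f p (0, 1, 0)
noncomputable def pdz (f : ℝ × ℝ × ℝ → ℝ) (p : ℝ × ℝ × ℝ) : ℝ := fderiv ℝ f p (0, 0, 1)

/-- Directional derivative along `ξ = (y, -x, κ)`. -/
noncomputable def dxi (κ : ℝ) (f : ℝ × ℝ × ℝ → ℝ) (p : ℝ × ℝ × ℝ) : ℝ :=
  p.2.1 * pdx f p - p.1 * pdy f p + κ * pdz f p

/-- Material derivative of a (time-dependent) scalar field along the flow `u`. -/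
noncomputable def matDer (u : ℝ → ℝ × ℝ × ℝ → ℝ × ℝ × ℝ) (g : ℝ → ℝ × ℝ × ℝ → ℝ)
    (t : ℝ) (p : ℝ × ℝ × ℝ) : ℝ :=
  deriv (fun s => g s p) t + (u t p).1 * pdx (g t) p + (u t p).2.1 * pdy (g t) p
    + (u t p).2.2 * pdz (g t) p

/-- For a C¹ helical solution `u, pr` of the Euler equations with helical pressure,
    the material derivative of `u_ξ = y u_x - x u_y + κ u_z` equals
    `F_ξ = y F_x - x F_y + κ F_z`. -/
theorem material_derivative_u_xi (κ : ℝ) (hκ : κ ≠ 0)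
    (u F : ℝ → ℝ × ℝ × ℝ → ℝ × ℝ × ℝ) (pr : ℝ → ℝ × ℝ × ℝ → ℝ)
    (hu : ContDiff ℝ 1 (fun q : ℝ × (ℝ × ℝ × ℝ) => u q.1 q.2))
    (hpr : ContDiff ℝ 1 (fun q : ℝ × (ℝ × ℝ × ℝ) => pr q.1 q.2))
    (heuler₁ : ∀ (t : ℝ) (p : ℝ × ℝ × ℝ),
      matDer u (fun s q => (u s q).1) t p = -(pdx (pr t) p) + (F t p).1)
    (heuler₂ : ∀ (t : ℝ) (p : ℝ × ℝ × ℝ),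
      matDer u (fun s q => (u s q).2.1) t p = -(pdy (pr t) p) + (F t p).2.1)
    (heuler₃ : ∀ (t : ℝ) (p : ℝ × ℝ × ℝ),
      matDer u (fun s q => (u s q).2.2) t p = -(pdz (pr t) p) + (F t p).2.2)
    (hhel₁ : ∀ (t : ℝ) (p : ℝ × ℝ × ℝ), dxi κ (fun q => (u t q).1) p = (u t p).2.1)
    (hhel₂ : ∀ (t : ℝ) (p : ℝ × ℝ × ℝ), dxi κ (fun q => (u t q).2.1) p = -(u t p).1)
    (hhel₃ : ∀ (t : ℝ) (p : ℝ × ℝ × ℝ), dxi κ (fun q => (u t q).2.2) p = 0)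
    (hhelp : ∀ (t : ℝ) (p : ℝ × ℝ × ℝ), dxi κ (pr t) p = 0) :
    ∀ (t : ℝ) (p : ℝ × ℝ × ℝ),
      matDer u (fun s q => q.2.1 * (u s q).1 - q.1 * (u s q).2.1 + κ * (u s q).2.2) t p
        = p.2.1 * (F t p).1 - p.1 * (F t p).2.1 + κ * (F t p).2.2 := by
  intro t p
  have hud : Differentiable ℝ (fun q : ℝ × (ℝ × ℝ × ℝ) => u q.1 q.2) :=
    hu.differentiable one_ne_zero
  have hsp : Differentiable ℝ (fun q : ℝ × ℝ × ℝ => u t q) :=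
    hud.comp ((differentiable_const t).prodMk differentiable_id)
  have h1 : DifferentiableAt ℝ (fun q => (u t q).1) p := (hsp.fst) p
  have h2 : DifferentiableAt ℝ (fun q => (u t q).2.1) p := ((hsp.snd).fst) p
  have h3 : DifferentiableAt ℝ (fun q => (u t q).2.2) p := ((hsp.snd).snd) p
  have htm : Differentiable ℝ (fun s : ℝ => u s p) :=
    hud.comp (differentiable_id.prodMk (differentiable_const p))
  have ht1 : DifferentiableAt ℝ (fun s => (u s p).1) t := (htm.fst) t
  have ht2 : DifferentiableAt ℝ (fun s => (u s p).2.1) t := ((htm.snd).fst) t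
  have ht3 : DifferentiableAt ℝ (fun s => (u s p).2.2) t := ((htm.snd).snd) t
  set L1 : (ℝ × ℝ × ℝ) →L[ℝ] ℝ := ContinuousLinearMap.fst ℝ ℝ (ℝ × ℝ) with hL1
  set L2 : (ℝ × ℝ × ℝ) →L[ℝ] ℝ :=
    (ContinuousLinearMap.fst ℝ ℝ ℝ).comp (ContinuousLinearMap.snd ℝ ℝ (ℝ × ℝ)) with hL2
  have hX : HasFDerivAt (fun q : ℝ × ℝ × ℝ => q.1) L1 p := L1.hasFDerivAt
  have hY : HasFDerivAt (fun q : ℝ × ℝ × ℝ => q.2.1) L2 p := L2.hasFDerivAt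
  have hG : HasFDerivAt
      (fun q : ℝ × ℝ × ℝ => q.2.1 * (u t q).1 - q.1 * (u t q).2.1 + κ * (u t q).2.2)
      (((p.2.1 • fderiv ℝ (fun q => (u t q).1) p + (u t p).1 • L2)
        - (p.1 • fderiv ℝ (fun q => (u t q).2.1) p + (u t p).2.1 • L1))
        + κ • fderiv ℝ (fun q => (u t q).2.2) p) p :=
    ((hY.mul h1.hasFDerivAt).sub (hX.mul h2.hasFDerivAt)).add (h3.hasFDerivAt.const_mul κ)
  have hpdx : pdx (fun q => q.2.1 * (u t q).1 - q.1 * (u t q).2.1 + κ * (u t q).2.2) p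
      = p.2.1 * pdx (fun q => (u t q).1) p
        - (p.1 * pdx (fun q => (u t q).2.1) p + (u t p).2.1)
        + κ * pdx (fun q => (u t q).2.2) p := by
    simp [pdx, hG.fderiv, hL1, hL2]
  have hpdy : pdy (fun q => q.2.1 * (u t q).1 - q.1 * (u t q).2.1 + κ * (u t q).2.2) p
      = (p.2.1 * pdy (fun q => (u t q).1) p + (u t p).1)
        - p.1 * pdy (fun q => (u t q).2.1) p
        + κ * pdy (fun q => (u t q).2.2) p := by
    simp [pdy, hG.fderiv, hL1, hL2]
  have hpdz : pdz (fun q => q.2.1 * (u t q).1 - q.1 * (u t q).2.1 + κ * (u t q).2.2) p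
      = p.2.1 * pdz (fun q => (u t q).1) p
        - p.1 * pdz (fun q => (u t q).2.1) p
        + κ * pdz (fun q => (u t q).2.2) p := by
    simp [pdz, hG.fderiv, hL1, hL2]
  have hdt : deriv (fun s => p.2.1 * (u s p).1 - p.1 * (u s p).2.1 + κ * (u s p).2.2) t
      = p.2.1 * deriv (fun s => (u s p).1) t - p.1 * deriv (fun s => (u s p).2.1) t
        + κ * deriv (fun s => (u s p).2.2) t := by
    exact (((ht1.hasDerivAt.const_mul _).sub (ht2.hasDerivAt.const_mul _)).add
        (ht3.hasDerivAt.const_mul _)).deriv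
  have e1 := heuler₁ t p
  have e2 := heuler₂ t p
  have e3 := heuler₃ t p
  have hp := hhelp t p
  simp only [matDer, dxi] at e1 e2 e3 hp ⊢
  rw [hdt, hpdx, hpdy, hpdz]
  linear_combination p.2.1 * e1 - p.1 * e2 + κ * e3 - hp
end

section
/- Let u : ℝ³ → ℝ³ be a C² helical vector field with u_ξ = y u_x - x u_y + κ u_z = 0. Then the vorticity Ω = ∇ × u satisfies Ω = (ω/κ) ξ for the scalar function ω = ∂u_y/∂x - ∂u_x/∂y; that is, Ω_x = (y/κ)(∂u_y/∂x - ∂u_x/∂y) and Ω_y = (-x/κ)(∂u_y/∂x - ∂u_x/∂y). -/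
lemma key_orth_deriv (κ : ℝ) (u₁ u₂ u₃ : ℝ × ℝ × ℝ → ℝ)
    (h1 : Differentiable ℝ u₁) (h2 : Differentiable ℝ u₂) (h3 : Differentiable ℝ u₃)
    (horth : ∀ p : ℝ × ℝ × ℝ, p.2.1 * u₁ p - p.1 * u₂ p + κ * u₃ p = 0)
    (p v : ℝ × ℝ × ℝ) :
    p.2.1 * fderiv ℝ u₁ p v + v.2.1 * u₁ p
      - (p.1 * fderiv ℝ u₂ p v + v.1 * u₂ p) + κ * fderiv ℝ u₃ p v = 0 := by
  set Ly : (ℝ × ℝ × ℝ) →L[ℝ] ℝ :=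
    (ContinuousLinearMap.fst ℝ ℝ ℝ).comp (ContinuousLinearMap.snd ℝ ℝ (ℝ × ℝ)) with hLy
  set Lx : (ℝ × ℝ × ℝ) →L[ℝ] ℝ := ContinuousLinearMap.fst ℝ ℝ (ℝ × ℝ) with hLx
  have hy : HasFDerivAt (fun q : ℝ × ℝ × ℝ => q.2.1) Ly p := Ly.hasFDerivAt
  have hx : HasFDerivAt (fun q : ℝ × ℝ × ℝ => q.1) Lx p := Lx.hasFDerivAt
  have hF : HasFDerivAt (fun q => q.2.1 * u₁ q - q.1 * u₂ q + κ * u₃ q)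
      ((p.2.1 • fderiv ℝ u₁ p + u₁ p • Ly) - (p.1 • fderiv ℝ u₂ p + u₂ p • Lx)
        + κ • fderiv ℝ u₃ p) p := by
    exact ((hy.mul (h1 p).hasFDerivAt).sub (hx.mul (h2 p).hasFDerivAt)).add
      ((h3 p).hasFDerivAt.const_mul κ)
  have hz : HasFDerivAt (fun q => q.2.1 * u₁ q - q.1 * u₂ q + κ * u₃ q)
      (0 : (ℝ × ℝ × ℝ) →L[ℝ] ℝ) p := by
    have : (fun q : ℝ × ℝ × ℝ => q.2.1 * u₁ q - q.1 * u₂ q + κ * u₃ q) = fun _ => 0 :=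
      funext horth
    rw [this]; exact hasFDerivAt_const 0 p
  have := hF.unique hz
  have h0 := congrArg (fun L : (ℝ × ℝ × ℝ) →L[ℝ] ℝ => L v) this
  simp [ContinuousLinearMap.add_apply, ContinuousLinearMap.sub_apply,
    ContinuousLinearMap.smul_apply, hLy, hLx, smul_eq_mul] at h0
  linarith [h0]

/-- For a C² helical vector field `u` orthogonal to the helices (`u_ξ = 0`),
    the vorticity `Ω = ∇ × u` satisfies `Ω = (ω/κ)(y, -x, κ)` where
    `ω = ∂u_y/∂x - ∂u_x/∂y`. -/
theorem vorticity_representation (κ : ℝ) (hκ : κ ≠ 0)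
    (u : ℝ × ℝ × ℝ → ℝ × ℝ × ℝ) (hu : ContDiff ℝ 2 u)
    (hhel₁ : ∀ p : ℝ × ℝ × ℝ, dxi κ (fun q => (u q).1) p = (u p).2.1)
    (hhel₂ : ∀ p : ℝ × ℝ × ℝ, dxi κ (fun q => (u q).2.1) p = -(u p).1)
    (hhel₃ : ∀ p : ℝ × ℝ × ℝ, dxi κ (fun q => (u q).2.2) p = 0)
    (horth : ∀ p : ℝ × ℝ × ℝ,
      p.2.1 * (u p).1 - p.1 * (u p).2.1 + κ * (u p).2.2 = 0) :
    ∀ p : ℝ × ℝ × ℝ,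
      -- Ω_x = (y/κ) ω
      pdy (fun q => (u q).2.2) p - pdz (fun q => (u q).2.1) p
        = (p.2.1 / κ) * (pdx (fun q => (u q).2.1) p - pdy (fun q => (u q).1) p) ∧
      -- Ω_y = (-x/κ) ω
      pdz (fun q => (u q).1) p - pdx (fun q => (u q).2.2) p
        = (-p.1 / κ) * (pdx (fun q => (u q).2.1) p - pdy (fun q => (u q).1) p) := by
  intro p
  have hd : Differentiable ℝ u := hu.differentiable (by norm_num)
  have h1 : Differentiable ℝ (fun q => (u q).1) := hd.fst
  have h2 : Differentiable ℝ (fun q => (u q).2.1) := hd.snd.fst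
  have h3 : Differentiable ℝ (fun q => (u q).2.2) := hd.snd.snd
  have Ex := key_orth_deriv κ _ _ _ h1 h2 h3 horth p (1, 0, 0)
  have Ey := key_orth_deriv κ _ _ _ h1 h2 h3 horth p (0, 1, 0)
  have H1 := hhel₁ p
  have H2 := hhel₂ p
  have H3 := hhel₃ p
  simp only [dxi] at H1 H2 H3
  simp only [pdx, pdy, pdz] at *
  norm_num at Ex Ey
  simp only [Prod.mk_zero_zero] at *
  constructor
  · field_simp
    linarith
  · field_simp
    linarith
end

section
/- Let u be a smooth divergence-free helical vector field with u_ξ = 0, let Ω = ∇×u, and suppose Ω satisfies the vorticity equation ∂Ω/∂t + (u·∇)Ω + (Ω·∇)u = ∇×F. Then the stretching term satisfies (Ω·∇)u = (1/κ) Ω_z 𝓡 u, where 𝓡 is the 3×3 matrix with 𝓡₁₂ = 1, 𝓡₂₁ = -1, all other entries 0; consequently ∂Ω/∂t + (u·∇)Ω + (1/κ)Ω_z 𝓡 u = ∇×F. -/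
set_option maxHeartbeats 1000000


/-- Components of the curl of a vector field on ℝ³. -/
noncomputable def curl1 (v : ℝ × ℝ × ℝ → ℝ × ℝ × ℝ) (p : ℝ × ℝ × ℝ) : ℝ :=
  pdy (fun q => (v q).2.2) p - pdz (fun q => (v q).2.1) p
noncomputable def curl2 (v : ℝ × ℝ × ℝ → ℝ × ℝ × ℝ) (p : ℝ × ℝ × ℝ) : ℝ :=
  pdz (fun q => (v q).1) p - pdx (fun q => (v q).2.2) p
noncomputable def curl3 (v : ℝ × ℝ × ℝ → ℝ × ℝ × ℝ) (p : ℝ × ℝ × ℝ) : ℝ :=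
  pdx (fun q => (v q).2.1) p - pdy (fun q => (v q).1) p

/-- Advection of a time-dependent scalar field `g` by the flow `u` (spatial part). -/
noncomputable def advect (u : ℝ → ℝ × ℝ × ℝ → ℝ × ℝ × ℝ) (g : ℝ × ℝ × ℝ → ℝ)
    (t : ℝ) (p : ℝ × ℝ × ℝ) : ℝ :=
  (u t p).1 * pdx g p + (u t p).2.1 * pdy g p + (u t p).2.2 * pdz g p

/-- For a smooth divergence-free helical flow orthogonal to the helices, the
    vortex stretching term is `(Ω·∇)u = (1/κ) Ω_z 𝓡u` where `𝓡u = (u_y, -u_x, 0)`,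
    and consequently `∂Ω/∂t + (u·∇)Ω + (1/κ) Ω_z 𝓡u = ∇×F`. -/
theorem stretching_term (κ : ℝ) (hκ : κ ≠ 0)
    (u F : ℝ → ℝ × ℝ × ℝ → ℝ × ℝ × ℝ)
    (hu : ContDiff ℝ (⊤ : ℕ∞) (fun q : ℝ × (ℝ × ℝ × ℝ) => u q.1 q.2))
    (hdiv : ∀ (t : ℝ) (p : ℝ × ℝ × ℝ),
      pdx (fun q => (u t q).1) p + pdy (fun q => (u t q).2.1) p
        + pdz (fun q => (u t q).2.2) p = 0)
    (hhel₁ : ∀ (t : ℝ) (p : ℝ × ℝ × ℝ), dxi κ (fun q => (u t q).1) p = (u t p).2.1)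
    (hhel₂ : ∀ (t : ℝ) (p : ℝ × ℝ × ℝ), dxi κ (fun q => (u t q).2.1) p = -(u t p).1)
    (hhel₃ : ∀ (t : ℝ) (p : ℝ × ℝ × ℝ), dxi κ (fun q => (u t q).2.2) p = 0)
    (horth : ∀ (t : ℝ) (p : ℝ × ℝ × ℝ),
      p.2.1 * (u t p).1 - p.1 * (u t p).2.1 + κ * (u t p).2.2 = 0)
    -- the vorticity equation, componentwise:
    (hvort₁ : ∀ (t : ℝ) (p : ℝ × ℝ × ℝ),
      deriv (fun s => curl1 (u s) p) t + advect u (curl1 (u t)) t p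
        + (curl1 (u t) p * pdx (fun q => (u t q).1) p
          + curl2 (u t) p * pdy (fun q => (u t q).1) p
          + curl3 (u t) p * pdz (fun q => (u t q).1) p) = curl1 (F t) p)
    (hvort₂ : ∀ (t : ℝ) (p : ℝ × ℝ × ℝ),
      deriv (fun s => curl2 (u s) p) t + advect u (curl2 (u t)) t p
        + (curl1 (u t) p * pdx (fun q => (u t q).2.1) p
          + curl2 (u t) p * pdy (fun q => (u t q).2.1) p
          + curl3 (u t) p * pdz (fun q => (u t q).2.1) p) = curl2 (F t) p)
    (hvort₃ : ∀ (t : ℝ) (p : ℝ × ℝ × ℝ),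
      deriv (fun s => curl3 (u s) p) t + advect u (curl3 (u t)) t p
        + (curl1 (u t) p * pdx (fun q => (u t q).2.2) p
          + curl2 (u t) p * pdy (fun q => (u t q).2.2) p
          + curl3 (u t) p * pdz (fun q => (u t q).2.2) p) = curl3 (F t) p) :
    ∀ (t : ℝ) (p : ℝ × ℝ × ℝ),
      -- the stretching term equals (1/κ) Ω_z 𝓡u:
      (curl1 (u t) p * pdx (fun q => (u t q).1) p
          + curl2 (u t) p * pdy (fun q => (u t q).1) p
          + curl3 (u t) p * pdz (fun q => (u t q).1) p
        = (1 / κ) * curl3 (u t) p * (u t p).2.1 ∧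
       curl1 (u t) p * pdx (fun q => (u t q).2.1) p
          + curl2 (u t) p * pdy (fun q => (u t q).2.1) p
          + curl3 (u t) p * pdz (fun q => (u t q).2.1) p
        = (1 / κ) * curl3 (u t) p * (-(u t p).1) ∧
       curl1 (u t) p * pdx (fun q => (u t q).2.2) p
          + curl2 (u t) p * pdy (fun q => (u t q).2.2) p
          + curl3 (u t) p * pdz (fun q => (u t q).2.2) p = 0) ∧
      -- consequently, the vorticity equation with the stretching term replaced:
      (deriv (fun s => curl1 (u s) p) t + advect u (curl1 (u t)) t p
          + (1 / κ) * curl3 (u t) p * (u t p).2.1 = curl1 (F t) p ∧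
       deriv (fun s => curl2 (u s) p) t + advect u (curl2 (u t)) t p
          + (1 / κ) * curl3 (u t) p * (-(u t p).1) = curl2 (F t) p ∧
       deriv (fun s => curl3 (u s) p) t + advect u (curl3 (u t)) t p
          = curl3 (F t) p) := by

  intro t p
  -- component functions
  set f1 : ℝ × ℝ × ℝ → ℝ := fun q => (u t q).1 with hf1
  set f2 : ℝ × ℝ × ℝ → ℝ := fun q => (u t q).2.1 with hf2
  set f3 : ℝ × ℝ × ℝ → ℝ := fun q => (u t q).2.2 with hf3
  have hcu : ContDiff ℝ (⊤ : ℕ∞) (u t) := hu.comp (contDiff_const.prodMk contDiff_id)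
  have hd : Differentiable ℝ (u t) := hcu.differentiable (by simp)
  have hd1 : Differentiable ℝ f1 := hd.fst
  have hd2 : Differentiable ℝ f2 := hd.snd.fst
  have hd3 : Differentiable ℝ f3 := hd.snd.snd
  -- differentiate the orthogonality relation
  have key : ∀ v : ℝ × ℝ × ℝ,
      v.2.1 * f1 p + p.2.1 * (fderiv ℝ f1 p v)
        - (v.1 * f2 p + p.1 * (fderiv ℝ f2 p v)) + κ * (fderiv ℝ f3 p v) = 0 := by
    intro v
    have A : HasFDerivAt (fun q : ℝ × ℝ × ℝ => q.2.1 * f1 q)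
        ((p.2.1 • fderiv ℝ f1 p) + (f1 p •
          ((ContinuousLinearMap.fst ℝ ℝ ℝ).comp
            (ContinuousLinearMap.snd ℝ ℝ (ℝ × ℝ))))) p :=
      (hasFDerivAt_snd.fst).mul ((hd1 p).hasFDerivAt)
    have B : HasFDerivAt (fun q : ℝ × ℝ × ℝ => q.1 * f2 q)
        ((p.1 • fderiv ℝ f2 p) + (f2 p • (ContinuousLinearMap.fst ℝ ℝ (ℝ × ℝ)))) p :=
      hasFDerivAt_fst.mul ((hd2 p).hasFDerivAt)
    have C : HasFDerivAt (fun q : ℝ × ℝ × ℝ => κ * f3 q) (κ • fderiv ℝ f3 p) p :=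
      ((hd3 p).hasFDerivAt).const_mul κ
    have H := (A.sub B).add C
    have H0 : HasFDerivAt (fun q : ℝ × ℝ × ℝ => q.2.1 * f1 q - q.1 * f2 q + κ * f3 q)
        (0 : (ℝ × ℝ × ℝ) →L[ℝ] ℝ) p := by
      have he : (fun q : ℝ × ℝ × ℝ => q.2.1 * f1 q - q.1 * f2 q + κ * f3 q)
          = fun _ => (0 : ℝ) := funext fun q => horth t q
      rw [he]; exact hasFDerivAt_const 0 p
    have hu0 := H.unique H0
    have := congrArg (fun (L : (ℝ × ℝ × ℝ) →L[ℝ] ℝ) => L v) hu0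
    simp only [ContinuousLinearMap.add_apply, ContinuousLinearMap.sub_apply,
      ContinuousLinearMap.smul_apply, ContinuousLinearMap.comp_apply,
      ContinuousLinearMap.coe_fst', ContinuousLinearMap.coe_snd',
      ContinuousLinearMap.zero_apply, smul_eq_mul] at this
    linarith [this]
  have hx := key (1, 0, 0)
  have hy := key (0, 1, 0)
  simp only [mul_one, mul_zero, zero_mul, one_mul, zero_add, add_zero] at hx hy
  -- rewrite in pdx/pdy notation
  have hx' : p.2.1 * pdx f1 p - (f2 p + p.1 * pdx f2 p) + κ * pdx f3 p = 0 := hx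
  have hy' : f1 p + p.2.1 * pdy f1 p - p.1 * pdy f2 p + κ * pdy f3 p = 0 := hy
  have h1 := hhel₁ t p
  have h2 := hhel₂ t p
  have h3 := hhel₃ t p
  simp only [dxi, ← hf1, ← hf2, ← hf3] at h1 h2 h3
  -- curl identities
  have hc1 : κ * (pdy f3 p - pdz f2 p) = p.2.1 * (pdx f2 p - pdy f1 p) := by
    linear_combination hy' - h2
  have hc2 : κ * (pdz f1 p - pdx f3 p) = -p.1 * (pdx f2 p - pdy f1 p) := by
    linear_combination h1 - hx'
  have hcurl1 : curl1 (u t) p = pdy f3 p - pdz f2 p := rfl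
  have hcurl2 : curl2 (u t) p = pdz f1 p - pdx f3 p := rfl
  have hcurl3 : curl3 (u t) p = pdx f2 p - pdy f1 p := rfl
  have h1' : p.2.1 * pdx f1 p - p.1 * pdy f1 p + κ * pdz f1 p = f2 p := h1
  have h2' : p.2.1 * pdx f2 p - p.1 * pdy f2 p + κ * pdz f2 p = -f1 p := h2
  have S1 : κ * (curl1 (u t) p * pdx f1 p + curl2 (u t) p * pdy f1 p
      + curl3 (u t) p * pdz f1 p) = curl3 (u t) p * f2 p := by
    rw [hcurl1, hcurl2, hcurl3]
    linear_combination pdx f1 p * hc1 + pdy f1 p * hc2 + (pdx f2 p - pdy f1 p) * h1'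
  have S2 : κ * (curl1 (u t) p * pdx f2 p + curl2 (u t) p * pdy f2 p
      + curl3 (u t) p * pdz f2 p) = curl3 (u t) p * (-f1 p) := by
    rw [hcurl1, hcurl2, hcurl3]
    linear_combination pdx f2 p * hc1 + pdy f2 p * hc2 + (pdx f2 p - pdy f1 p) * h2'
  have S3 : κ * (curl1 (u t) p * pdx f3 p + curl2 (u t) p * pdy f3 p
      + curl3 (u t) p * pdz f3 p) = 0 := by
    rw [hcurl1, hcurl2, hcurl3]
    linear_combination pdx f3 p * hc1 + pdy f3 p * hc2 + (pdx f2 p - pdy f1 p) * h3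
  have s1 : curl1 (u t) p * pdx f1 p + curl2 (u t) p * pdy f1 p
      + curl3 (u t) p * pdz f1 p = (1 / κ) * curl3 (u t) p * f2 p := by
    field_simp
    linear_combination S1
  have s2 : curl1 (u t) p * pdx f2 p + curl2 (u t) p * pdy f2 p
      + curl3 (u t) p * pdz f2 p = (1 / κ) * curl3 (u t) p * (-f1 p) := by
    field_simp
    linear_combination S2
  have s3 : curl1 (u t) p * pdx f3 p + curl2 (u t) p * pdy f3 p
      + curl3 (u t) p * pdz f3 p = 0 := by
    have := mul_eq_zero.mp S3
    tauto
  refine ⟨⟨s1, s2, s3⟩, ?_, ?_, ?_⟩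
  · linarith [hvort₁ t p, s1]
  · linarith [hvort₂ t p, s2]
  · linarith [hvort₃ t p, s3]
end

section
/- Let u = (u_x, u_y, u_z) satisfy the helicality relations (κ ∂u_z/∂z = -y ∂u_z/∂x + x ∂u_z/∂y, etc.) and the orthogonality condition u_z = (1/κ)(-y u_x + x u_y). Then the 3D divergence satisfies ∂u_x/∂x + ∂u_y/∂y + ∂u_z/∂z = (1/κ²)[∂/∂x((κ²+y²)u_x - xy u_y) + ∂/∂y((κ²+x²)u_y - xy u_x)]. In particular, u is divergence free iff the reduced 2D field satisfies ∂/∂x((κ²+y²)u_x - xy u_y) + ∂/∂y((κ²+x²)u_y - xy u_x) = 0. -/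
/-- For a C¹ helical vector field orthogonal to the helices, the 3D divergence
    equals `(1/κ²)[∂_x((κ²+y²)u_x - xy u_y) + ∂_y((κ²+x²)u_y - xy u_x)]`;
    in particular `u` is divergence free iff the reduced 2D expression vanishes. -/
theorem divergence_reduction (κ : ℝ) (hκ : κ ≠ 0)
    (u : ℝ × ℝ × ℝ → ℝ × ℝ × ℝ) (hu : ContDiff ℝ 1 u)
    (hhel₁ : ∀ p : ℝ × ℝ × ℝ, dxi κ (fun q => (u q).1) p = (u p).2.1)
    (hhel₂ : ∀ p : ℝ × ℝ × ℝ, dxi κ (fun q => (u q).2.1) p = -(u p).1)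
    (hhel₃ : ∀ p : ℝ × ℝ × ℝ, dxi κ (fun q => (u q).2.2) p = 0)
    (horth : ∀ p : ℝ × ℝ × ℝ,
      (u p).2.2 = (1 / κ) * (-p.2.1 * (u p).1 + p.1 * (u p).2.1)) :
    ∀ p : ℝ × ℝ × ℝ,
      (pdx (fun q => (u q).1) p + pdy (fun q => (u q).2.1) p
          + pdz (fun q => (u q).2.2) p
        = (1 / κ ^ 2) *
          (pdx (fun q => (κ ^ 2 + q.2.1 ^ 2) * (u q).1 - q.1 * q.2.1 * (u q).2.1) p
            + pdy (fun q => (κ ^ 2 + q.1 ^ 2) * (u q).2.1 - q.1 * q.2.1 * (u q).1) p))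
      ∧
      ((pdx (fun q => (u q).1) p + pdy (fun q => (u q).2.1) p
          + pdz (fun q => (u q).2.2) p = 0)
        ↔ pdx (fun q => (κ ^ 2 + q.2.1 ^ 2) * (u q).1 - q.1 * q.2.1 * (u q).2.1) p
            + pdy (fun q => (κ ^ 2 + q.1 ^ 2) * (u q).2.1 - q.1 * q.2.1 * (u q).1) p
          = 0) := by

  have hud := hu.differentiable one_ne_zero
  intro p
  -- differentiability of the components at p
  have hf : DifferentiableAt ℝ (fun q => (u q).1) p := (hud p).fst
  have hg : DifferentiableAt ℝ (fun q => (u q).2.1) p := (hud p).snd.fst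
  have hfd := hf.hasFDerivAt
  have hgd := hg.hasFDerivAt
  have hX : HasFDerivAt (fun q : ℝ × ℝ × ℝ => q.1)
      (ContinuousLinearMap.fst ℝ ℝ (ℝ × ℝ)) p := hasFDerivAt_fst
  have hY : HasFDerivAt (fun q : ℝ × ℝ × ℝ => q.2.1)
      ((ContinuousLinearMap.fst ℝ ℝ ℝ).comp (ContinuousLinearMap.snd ℝ ℝ (ℝ × ℝ))) p :=
    hasFDerivAt_fst.comp p hasFDerivAt_snd
  have hY2 : HasFDerivAt (fun q : ℝ × ℝ × ℝ => q.2.1 ^ 2)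
      ((p.2.1 • ((ContinuousLinearMap.fst ℝ ℝ ℝ).comp (ContinuousLinearMap.snd ℝ ℝ (ℝ × ℝ))))
        + (p.2.1 • ((ContinuousLinearMap.fst ℝ ℝ ℝ).comp (ContinuousLinearMap.snd ℝ ℝ (ℝ × ℝ))))) p := by
    simpa only [pow_two, Pi.mul_def] using hY.mul hY
  have hX2 : HasFDerivAt (fun q : ℝ × ℝ × ℝ => q.1 ^ 2)
      ((p.1 • (ContinuousLinearMap.fst ℝ ℝ (ℝ × ℝ)))
        + (p.1 • (ContinuousLinearMap.fst ℝ ℝ (ℝ × ℝ)))) p := by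
    simpa only [pow_two, Pi.mul_def] using hX.mul hX
  set x := p.1 with hx
  set y := p.2.1 with hy
  set fp := (u p).1
  set gp := (u p).2.1
  set fx := fderiv ℝ (fun q => (u q).1) p (1, 0, 0) with hfx
  set fy := fderiv ℝ (fun q => (u q).1) p (0, 1, 0) with hfy
  set fz := fderiv ℝ (fun q => (u q).1) p (0, 0, 1) with hfz
  set gx := fderiv ℝ (fun q => (u q).2.1) p (1, 0, 0) with hgx
  set gy := fderiv ℝ (fun q => (u q).2.1) p (0, 1, 0) with hgy
  set gz := fderiv ℝ (fun q => (u q).2.1) p (0, 0, 1) with hgz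
  -- derivative of A = (κ²+y²) f - xy g
  have hA : HasFDerivAt (fun q : ℝ × ℝ × ℝ =>
      (κ ^ 2 + q.2.1 ^ 2) * (u q).1 - q.1 * q.2.1 * (u q).2.1)
      ((((κ ^ 2 + y ^ 2) • fderiv ℝ (fun q => (u q).1) p
          + fp • (0 + ((y • ((ContinuousLinearMap.fst ℝ ℝ ℝ).comp (ContinuousLinearMap.snd ℝ ℝ (ℝ × ℝ))))
            + (y • ((ContinuousLinearMap.fst ℝ ℝ ℝ).comp (ContinuousLinearMap.snd ℝ ℝ (ℝ × ℝ)))))))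
        - ((x * y) • fderiv ℝ (fun q => (u q).2.1) p
          + gp • (x • ((ContinuousLinearMap.fst ℝ ℝ ℝ).comp (ContinuousLinearMap.snd ℝ ℝ (ℝ × ℝ)))
            + y • (ContinuousLinearMap.fst ℝ ℝ (ℝ × ℝ)))))) p := by
    exact (((hasFDerivAt_const (κ ^ 2) p).add hY2).mul hfd).sub ((hX.mul hY).mul hgd)
  have hB : HasFDerivAt (fun q : ℝ × ℝ × ℝ =>
      (κ ^ 2 + q.1 ^ 2) * (u q).2.1 - q.1 * q.2.1 * (u q).1)
      ((((κ ^ 2 + x ^ 2) • fderiv ℝ (fun q => (u q).2.1) p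
          + gp • (0 + ((x • (ContinuousLinearMap.fst ℝ ℝ (ℝ × ℝ))) + (x • (ContinuousLinearMap.fst ℝ ℝ (ℝ × ℝ))))))
        - ((x * y) • fderiv ℝ (fun q => (u q).1) p
          + fp • (x • ((ContinuousLinearMap.fst ℝ ℝ ℝ).comp (ContinuousLinearMap.snd ℝ ℝ (ℝ × ℝ)))
            + y • (ContinuousLinearMap.fst ℝ ℝ (ℝ × ℝ)))))) p := by
    exact (((hasFDerivAt_const (κ ^ 2) p).add hX2).mul hgd).sub ((hX.mul hY).mul hfd)
  have hpdxA : pdx (fun q => (κ ^ 2 + q.2.1 ^ 2) * (u q).1 - q.1 * q.2.1 * (u q).2.1) p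
      = (κ ^ 2 + y ^ 2) * fx - (x * y * gx + gp * y) := by
    rw [pdx, hA.fderiv]
    simp [hfx, hgx]
  have hpdyB : pdy (fun q => (κ ^ 2 + q.1 ^ 2) * (u q).2.1 - q.1 * q.2.1 * (u q).1) p
      = (κ ^ 2 + x ^ 2) * gy - (x * y * fy + fp * x) := by
    rw [pdy, hB.fderiv]
    simp [hfy, hgy]
  -- rewrite u_z using orthogonality
  have heq : (fun q => (u q).2.2)
      = fun q : ℝ × ℝ × ℝ => (1 / κ) * (-q.2.1 * (u q).1 + q.1 * (u q).2.1) :=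
    funext horth
  have hC : HasFDerivAt (fun q : ℝ × ℝ × ℝ => (1 / κ) * (-q.2.1 * (u q).1 + q.1 * (u q).2.1))
      ((1 / κ) • ((((-y) • fderiv ℝ (fun q => (u q).1) p
          + fp • (-((ContinuousLinearMap.fst ℝ ℝ ℝ).comp (ContinuousLinearMap.snd ℝ ℝ (ℝ × ℝ)))))
        + (x • fderiv ℝ (fun q => (u q).2.1) p
          + gp • (ContinuousLinearMap.fst ℝ ℝ (ℝ × ℝ)))))) p :=
    (((hY.neg.mul hfd).add (hX.mul hgd)).const_mul (1 / κ))
  have hpdz : pdz (fun q => (u q).2.2) p = (1 / κ) * (-y * fz + x * gz) := by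
    rw [pdz, heq, hC.fderiv]
    simp [hfz, hgz]
    ring
  -- helicality relations for f and g give fz and gz
  have h1 : y * fx - x * fy + κ * fz = gp := by
    have := hhel₁ p
    simpa [dxi, pdx, pdy, pdz, hfx, hfy, hfz] using this
  have h2 : y * gx - x * gy + κ * gz = -fp := by
    have := hhel₂ p
    simpa [dxi, pdx, pdy, pdz, hgx, hgy, hgz] using this
  have hfz' : fz = (gp - y * fx + x * fy) / κ := by
    field_simp
    linarith [h1]
  have hgz' : gz = (-fp - y * gx + x * gy) / κ := by
    field_simp
    linarith [h2]
  have hmain : pdx (fun q => (u q).1) p + pdy (fun q => (u q).2.1) p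
      + pdz (fun q => (u q).2.2) p
      = (1 / κ ^ 2) *
        (pdx (fun q => (κ ^ 2 + q.2.1 ^ 2) * (u q).1 - q.1 * q.2.1 * (u q).2.1) p
          + pdy (fun q => (κ ^ 2 + q.1 ^ 2) * (u q).2.1 - q.1 * q.2.1 * (u q).1) p) := by
    rw [hpdxA, hpdyB, hpdz, hfz', hgz']
    show fx + gy + _ = _
    field_simp
    ring
  refine ⟨hmain, ?_⟩
  rw [hmain]
  constructor
  · intro h
    have hκ2 : (1 / κ ^ 2 : ℝ) ≠ 0 := by positivity
    exact (mul_eq_zero.mp h).resolve_left hκ2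
  · intro h
    rw [h, mul_zero]
end
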